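/- The logarithmic robustness equals the maximal advantage ratio: for F a nonempty compact convex set of density matrices containing a positive definite state, and ρ a density matrix, 1 + R(ρ) = max over PSD matrices M ≠ 0 of the ratio Tr[Mρ] / max_{σ∈F} Tr[Mσ]. -/

import Mathlib

open Matrix ComplexOrder

noncomputable section

/-- Trace inner product on matrices: `⟨A, B⟩ = Re Tr[A B]` (real for Hermitian `A`, `B`). -/
def trInner {n : ℕ} (A B : Matrix (Fin n) (Fin n) ℂ) : ℝ := ((A * B).trace).re

/-- A density matrix: positive semidefinite with unit trace. -/
def IsDensity {n : ℕ} (ρ : Matrix (Fin n) (Fin n) ℂ) : Prop := ρ.PosSemidef ∧ ρ.trace = 1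
/-- The feasible set of the generalized robustness program of \`ρ\` relative to \`F\`:
\`λ ≥ 0\` such that \`(ρ + λσ)/(1+λ) ∈ F\` for some density matrix \`σ\`. -/
def robSet {n : ℕ} (F : Set (Matrix (Fin n) (Fin n) ℂ)) (ρ : Matrix (Fin n) (Fin n) ℂ) :
    Set ℝ :=
  {lam | 0 ≤ lam ∧ ∃ σ, IsDensity σ ∧ (1 + lam)⁻¹ • (ρ + lam • σ) ∈ F}

/-!
If `(ρ + rσ)/(1 + r) = τ ∈ F`, then for every PSD `M` we have
`Tr[Mρ] ≤ Tr[Mρ] + r Tr[Mσ] = (1 + r) Tr[Mτ]`, so no ratio exceeds `1 + r`; the positive definite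
state of `F` keeps the denominators positive.

For the converse, let `0 < t < r`. Then `ρ` lies outside the compact convex set
`(1 + t) F - PSD`, because `ρ = (1 + t) τ - P` would make `t` feasible with `σ = P / t`.
A Hahn–Banach functional separating `ρ` from this set is bounded above on it, hence nonnegative on
the PSD cone; on Hermitian matrices it is `X ↦ Re Tr[MX]` for a PSD `M`, and then
`Tr[Mρ] > (1 + t) Tr[Mτ]` for all `τ ∈ F` (for `t ≤ 0`, `M = 1` does this weakly). Normalized to
the unit sphere, these witnesses form a decreasing family of nonempty compact sets indexed by
`t < r`, and a common point `M` has ratio `1 + r`.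
-/

open scoped Pointwise

variable {n : ℕ}

lemma trInner_comm (A B : Matrix (Fin n) (Fin n) ℂ) : trInner A B = trInner B A := by
  rw [trInner, trInner, trace_mul_comm]

lemma trInner_add_left (A B X : Matrix (Fin n) (Fin n) ℂ) :
    trInner (A + B) X = trInner A X + trInner B X := by
  simp [trInner, add_mul]

lemma trInner_add_right (M A B : Matrix (Fin n) (Fin n) ℂ) :
    trInner M (A + B) = trInner M A + trInner M B := by
  simp [trInner, mul_add]

lemma trInner_sub_right (M A B : Matrix (Fin n) (Fin n) ℂ) :
    trInner M (A - B) = trInner M A - trInner M B := by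
  simp [trInner, mul_sub]

lemma trInner_smul_left (c : ℝ) (A X : Matrix (Fin n) (Fin n) ℂ) :
    trInner (c • A) X = c * trInner A X := by
  simp [trInner]

lemma trInner_smul_right (c : ℝ) (M A : Matrix (Fin n) (Fin n) ℂ) :
    trInner M (c • A) = c * trInner M A := by
  simp [trInner]

lemma trInner_sum_right {ι : Type*} (s : Finset ι) (M : Matrix (Fin n) (Fin n) ℂ)
    (A : ι → Matrix (Fin n) (Fin n) ℂ) : trInner M (∑ i ∈ s, A i) = ∑ i ∈ s, trInner M (A i) := by
  simp [trInner, Finset.mul_sum, trace_sum]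

lemma trInner_one_left (X : Matrix (Fin n) (Fin n) ℂ) : trInner 1 X = X.trace.re := by
  simp [trInner]

lemma trInner_conjTranspose_left (A : Matrix (Fin n) (Fin n) ℂ) {X : Matrix (Fin n) (Fin n) ℂ}
    (hX : X.IsHermitian) : trInner Aᴴ X = trInner A X := by
  conv_lhs => rw [trInner, ← hX.eq, ← conjTranspose_mul, trace_conjTranspose]
  rw [trInner_comm, trInner]
  exact Complex.conj_re _

lemma trInner_vecMulVec (M : Matrix (Fin n) (Fin n) ℂ) (x : Fin n → ℂ) :
    trInner M (vecMulVec x (star x)) = (star x ⬝ᵥ M *ᵥ x).re := by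
  rw [trInner, mul_vecMulVec, trace_vecMulVec, dotProduct_comm]

lemma Continuous.trInner {X : Type*} [TopologicalSpace X] {f g : X → Matrix (Fin n) (Fin n) ℂ}
    (hf : Continuous f) (hg : Continuous g) : Continuous fun x => trInner (f x) (g x) :=
  Complex.continuous_re.comp (hf.matrix_mul hg).matrix_trace

lemma trInner_nonneg {A B : Matrix (Fin n) (Fin n) ℂ} (hA : A.PosSemidef) (hB : B.PosSemidef) :
    0 ≤ trInner A B := by
  obtain ⟨m, v, rfl⟩ := posSemidef_iff_eq_sum_vecMulVec.mp hB
  rw [trInner_sum_right]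
  exact Finset.sum_nonneg fun i _ => trInner_vecMulVec A (v i) ▸ hA.re_dotProduct_nonneg (v i)

lemma trInner_pos {A B : Matrix (Fin n) (Fin n) ℂ} (hA : A.PosDef) (hB : B.PosSemidef)
    (hB0 : B ≠ 0) : 0 < trInner A B := by
  obtain ⟨m, v, rfl⟩ := posSemidef_iff_eq_sum_vecMulVec.mp hB
  obtain ⟨i, hi⟩ : ∃ i, v i ≠ 0 := by
    by_contra! h
    simp [h] at hB0
  rw [trInner_sum_right]
  refine Finset.sum_pos' (fun j _ => ?_) ⟨i, Finset.mem_univ i, ?_⟩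
  · exact trInner_vecMulVec A (v j) ▸ hA.posSemidef.re_dotProduct_nonneg (v j)
  · exact trInner_vecMulVec A (v i) ▸ hA.re_dotProduct_pos hi

lemma posSemidef_of_forall_trInner_vecMulVec_nonneg {M : Matrix (Fin n) (Fin n) ℂ}
    (hM : M.IsHermitian) (h : ∀ x, 0 ≤ trInner M (vecMulVec x (star x))) : M.PosSemidef := by
  refine .of_dotProduct_mulVec_nonneg hM fun x => Complex.nonneg_iff.mpr ⟨?_, ?_⟩
  · exact trInner_vecMulVec M x ▸ h x
  · exact (hM.im_star_dotProduct_mulVec_self x).symm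

lemma isClosed_setOf_posSemidef : IsClosed {M : Matrix (Fin n) (Fin n) ℂ | M.PosSemidef} := by
  simp only [posSemidef_iff_dotProduct_mulVec, Set.ofPred_and, Set.ofPred_forall]
  refine .inter (isClosed_eq continuous_id.matrix_conjTranspose continuous_id) ?_
  exact isClosed_iInter fun x =>
    isClosed_le continuous_const
      (continuous_const.dotProduct (continuous_id.matrix_mulVec continuous_const))

lemma convex_setOf_posSemidef : Convex ℝ {M : Matrix (Fin n) (Fin n) ℂ | M.PosSemidef} :=
  fun _ hA _ hB _ _ ha hb _ => (hA.smul ha).add (hB.smul hb)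

lemma exists_trace_mul_eq (f : Matrix (Fin n) (Fin n) ℂ →ₗ[ℂ] ℂ) :
    ∃ A : Matrix (Fin n) (Fin n) ℂ, ∀ X, (A * X).trace = f X := by
  refine ⟨of fun q p => f (single p q 1), fun X => ?_⟩
  conv_rhs => rw [matrix_eq_sum_single X]
  simp only [map_sum, trace, diag, mul_apply, of_apply]
  rw [Finset.sum_comm]
  refine Finset.sum_congr rfl fun p _ => Finset.sum_congr rfl fun q _ => ?_
  rw [show single p q (X p q) = X p q • single p q 1 by rw [smul_single, smul_eq_mul, mul_one],
    map_smul, smul_eq_mul, mul_comm]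

lemma exists_isHermitian_trInner_eq (f : Matrix (Fin n) (Fin n) ℂ →ₗ[ℂ] ℂ) :
    ∃ M : Matrix (Fin n) (Fin n) ℂ, M.IsHermitian ∧
      ∀ X, X.IsHermitian → trInner M X = (f X).re := by
  obtain ⟨A, hA⟩ := exists_trace_mul_eq f
  refine ⟨(2⁻¹ : ℝ) • (A + Aᴴ), (isHermitian_add_transpose_self A).smul (.all _), fun X hX => ?_⟩
  rw [trInner_smul_left, trInner_add_left, trInner_conjTranspose_left _ hX, trInner, hA]
  ring

lemma exists_posSemidef_trInner_lt_of_notMem_sub {K : Set (Matrix (Fin n) (Fin n) ℂ)}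
    (hK : IsCompact K) (hKconv : Convex ℝ K) (hKne : K.Nonempty) (hKh : ∀ X ∈ K, X.IsHermitian)
    {ρ : Matrix (Fin n) (Fin n) ℂ} (hρ : ρ.IsHermitian) (hρK : ρ ∉ K - {P | P.PosSemidef}) :
    ∃ M : Matrix (Fin n) (Fin n) ℂ, M.PosSemidef ∧ ∀ X ∈ K, trInner M X < trInner M ρ := by
  have : LocallyConvexSpace ℝ (Matrix (Fin n) (Fin n) ℂ) :=
    inferInstanceAs (LocallyConvexSpace ℝ (Fin n → Fin n → ℂ))
  have hclosed : IsClosed (K - {P | P.PosSemidef}) := by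
    rw [sub_eq_add_neg]
    exact isClosed_setOf_posSemidef.neg.add_left_of_isCompact hK
  obtain ⟨f, u, hfK, hfρ⟩ := RCLike.geometric_hahn_banach_closed_point (𝕜 := ℂ)
    (hKconv.sub convex_setOf_posSemidef) hclosed hρK
  obtain ⟨M, hM, hMf⟩ := exists_isHermitian_trInner_eq f.toLinearMap
  have hlt : ∀ X ∈ K, ∀ P : Matrix (Fin n) (Fin n) ℂ, P.PosSemidef →
      trInner M X - trInner M P < u := fun X hX P hP => by
    rw [← trInner_sub_right, hMf _ ((hKh X hX).sub hP.1)]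
    exact hfK _ (Set.sub_mem_sub hX hP)
  have hltX : ∀ X ∈ K, trInner M X < u := fun X hX => by
    simpa [trInner] using hlt X hX 0 .zero
  obtain ⟨X, hX⟩ := hKne
  refine ⟨M, posSemidef_of_forall_trInner_vecMulVec_nonneg hM fun x => ?_, fun Y hY => ?_⟩
  · -- otherwise `X - s • vecMulVec x (star x)` would violate the bound `u` for large `s`
    by_contra! hb
    have hs : 0 ≤ (u - trInner M X) / -trInner M (vecMulVec x (star x)) :=
      div_nonneg (by linarith [hltX X hX]) (by linarith)
    have := hlt X hX _ ((posSemidef_vecMulVec_self_star x).smul hs)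
    rw [trInner_smul_right, div_mul_eq_mul_div, div_neg, mul_div_cancel_right₀ _ hb.ne] at this
    linarith
  · exact (hltX Y hY).trans (hfρ.trans_eq (hMf ρ hρ).symm)

lemma mem_robSet_of_smul_sub_eq {F : Set (Matrix (Fin n) (Fin n) ℂ)}
    {ρ τ P : Matrix (Fin n) (Fin n) ℂ} (hρ : ρ.trace = 1) (hτF : τ ∈ F) (hτ : τ.trace = 1)
    (hP : P.PosSemidef) {t : ℝ} (ht : 0 < t) (h : (1 + t) • τ - P = ρ) : t ∈ robSet F ρ := by
  have hPt : P.trace = t := by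
    rw [show P = (1 + t) • τ - ρ by rw [← h]; abel, trace_sub, trace_smul, hτ, hρ]
    simp
  refine ⟨ht.le, t⁻¹ • P, ⟨hP.smul (inv_nonneg.2 ht.le), ?_⟩, ?_⟩
  · rw [trace_smul, hPt, Complex.real_smul, ← Complex.ofReal_mul, inv_mul_cancel₀ ht.ne',
      Complex.ofReal_one]
  · rwa [smul_smul, mul_inv_cancel₀ ht.ne', one_smul, ← h, sub_add_cancel, smul_smul,
      inv_mul_cancel₀ (by positivity), one_smul]

def advantageCone (F : Set (Matrix (Fin n) (Fin n) ℂ)) (ρ : Matrix (Fin n) (Fin n) ℂ) (t : ℝ) :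
    Set (Matrix (Fin n) (Fin n) ℂ) :=
  {M | M.PosSemidef ∧ ∀ τ ∈ F, (1 + t) * trInner M τ ≤ trInner M ρ}

section advantageCone

variable {F : Set (Matrix (Fin n) (Fin n) ℂ)} {ρ M : Matrix (Fin n) (Fin n) ℂ} {t : ℝ}

lemma isClosed_advantageCone : IsClosed (advantageCone F ρ t) := by
  simp only [advantageCone, Set.ofPred_and, Set.ofPred_forall]
  exact isClosed_setOf_posSemidef.inter <| isClosed_iInter fun τ => isClosed_iInter fun _ =>
    isClosed_le (continuous_const.mul (continuous_id.trInner continuous_const))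
      (continuous_id.trInner continuous_const)

lemma smul_mem_advantageCone (hM : M ∈ advantageCone F ρ t) {c : ℝ} (hc : 0 ≤ c) :
    c • M ∈ advantageCone F ρ t := by
  refine ⟨hM.1.smul hc, fun τ hτ => ?_⟩
  rw [trInner_smul_left, trInner_smul_left]
  nlinarith [hM.2 τ hτ]

lemma antitone_advantageCone (hF : ∀ τ ∈ F, τ.PosSemidef) : Antitone (advantageCone F ρ) :=
  fun _ _ hst _ hM => ⟨hM.1, fun τ hτ =>
    (mul_le_mul_of_nonneg_right (by linarith) (trInner_nonneg hM.1 (hF τ hτ))).trans (hM.2 τ hτ)⟩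

lemma one_mem_advantageCone (hF : ∀ τ ∈ F, τ.trace = 1) (hρ : ρ.trace = 1) (ht : t ≤ 0) :
    1 ∈ advantageCone F ρ t :=
  ⟨.one, fun τ hτ => by simp [trInner_one_left, hF τ hτ, hρ, ht]⟩

lemma mem_advantageCone_of_forall_lt {r : ℝ} (h : ∀ t < r, M ∈ advantageCone F ρ t) :
    M ∈ advantageCone F ρ r := by
  refine ⟨(h (r - 1) (by linarith)).1, fun τ hτ => ?_⟩
  have hclosed : IsClosed {t : ℝ | (1 + t) * trInner M τ ≤ trInner M ρ} :=
    isClosed_le (by fun_prop) continuous_const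
  exact hclosed.closure_subset_iff.mpr (fun t ht => (h t ht).2 τ hτ)
    (closure_Iio r ▸ Set.self_mem_Iic)

end advantageCone

lemma exists_ne_zero_mem_advantageCone_of_notMem_robSet {F : Set (Matrix (Fin n) (Fin n) ℂ)}
    (hcomp : IsCompact F) (hconv : Convex ℝ F) (hne : F.Nonempty) (hF : ∀ τ ∈ F, IsDensity τ)
    {ρ : Matrix (Fin n) (Fin n) ℂ} (hρ : IsDensity ρ) {t : ℝ} (ht : 0 < t)
    (htF : t ∉ robSet F ρ) : ∃ M ∈ advantageCone F ρ t, M ≠ 0 := by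
  have hρK : ρ ∉ (1 + t) • F - {P | P.PosSemidef} := by
    rintro ⟨_, ⟨τ, hτ, rfl⟩, P, hP, h⟩
    exact htF (mem_robSet_of_smul_sub_eq hρ.2 hτ (hF τ hτ).2 hP ht h)
  obtain ⟨M, hM, hMK⟩ := exists_posSemidef_trInner_lt_of_notMem_sub (hcomp.smul _) (hconv.smul _)
    hne.smul_set (by rintro _ ⟨τ, hτ, rfl⟩; exact (hF τ hτ).1.1.smul (.all _)) hρ.1.1 hρK
  have hlt : ∀ τ ∈ F, (1 + t) * trInner M τ < trInner M ρ := fun τ hτ =>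
    trInner_smul_right (1 + t) M τ ▸ hMK _ (Set.smul_mem_smul_set hτ)
  obtain ⟨τ, hτ⟩ := hne
  refine ⟨M, ⟨hM, fun τ hτ => (hlt τ hτ).le⟩, ?_⟩
  rintro rfl
  simpa [trInner] using hlt τ hτ

lemma IsDensity.one_ne_zero {ρ : Matrix (Fin n) (Fin n) ℂ} (hρ : IsDensity ρ) :
    (1 : Matrix (Fin n) (Fin n) ℂ) ≠ 0 := fun h => by
  have := hρ.2
  rw [← one_mul ρ, h, zero_mul, trace_zero] at this
  exact zero_ne_one this

section

-- The sup norm only serves to normalize witnesses onto a compact sphere.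
attribute [local instance] Matrix.normedAddCommGroup Matrix.normedSpace

lemma exists_ne_zero_mem_advantageCone {F : Set (Matrix (Fin n) (Fin n) ℂ)}
    (hcomp : IsCompact F) (hconv : Convex ℝ F) (hne : F.Nonempty) (hF : ∀ τ ∈ F, IsDensity τ)
    {ρ : Matrix (Fin n) (Fin n) ℂ} (hρ : IsDensity ρ) {r : ℝ} (hr : IsLeast (robSet F ρ) r) :
    ∃ M ∈ advantageCone F ρ r, M ≠ 0 := by
  set K : Set.Iio r → Set (Matrix (Fin n) (Fin n) ℂ) :=
    fun t => advantageCone F ρ t ∩ Metric.sphere 0 1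
  have hK : ∀ t, (K t).Nonempty := by
    rintro ⟨t, ht⟩
    obtain ⟨M, hM, hM0⟩ : ∃ M ∈ advantageCone F ρ t, M ≠ 0 := by
      rcases le_or_gt t 0 with ht0 | ht0
      · exact ⟨1, one_mem_advantageCone (fun τ hτ => (hF τ hτ).2) hρ.2 ht0, hρ.one_ne_zero⟩
      · exact exists_ne_zero_mem_advantageCone_of_notMem_robSet hcomp hconv hne hF hρ ht0
          fun htF => (hr.2 htF).not_gt ht
    exact ⟨‖M‖⁻¹ • M, smul_mem_advantageCone hM (by positivity), by simp [norm_smul, hM0]⟩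
  have hKanti : Antitone K := fun s t hst =>
    Set.inter_subset_inter_left _ (antitone_advantageCone (fun τ hτ => (hF τ hτ).1) hst)
  have : Nonempty (Set.Iio r) := ⟨⟨r - 1, by simp⟩⟩
  obtain ⟨M, hM⟩ := IsCompact.nonempty_iInter_of_directed_nonempty_isCompact_isClosed K
    hKanti.directed_ge hK (fun _ => (isCompact_sphere 0 1).inter_left isClosed_advantageCone)
    (fun _ => isClosed_advantageCone.inter Metric.isClosed_sphere)
  simp only [Set.mem_iInter] at hM
  refine ⟨M, mem_advantageCone_of_forall_lt fun t ht => (hM ⟨t, ht⟩).1, ?_⟩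
  rintro rfl
  simpa using (hM (Classical.arbitrary _)).2

end

section sSup

variable {F : Set (Matrix (Fin n) (Fin n) ℂ)} {ρ M : Matrix (Fin n) (Fin n) ℂ}

lemma le_sSup_trInner (hcomp : IsCompact F) {σ : Matrix (Fin n) (Fin n) ℂ} (hσ : σ ∈ F) :
    trInner M σ ≤ sSup {y : ℝ | ∃ σ ∈ F, y = trInner M σ} := by
  refine le_csSup ?_ ⟨σ, hσ, rfl⟩
  refine (hcomp.image (f := trInner M) (continuous_const.trInner continuous_id)).bddAbove.mono ?_
  rintro _ ⟨σ, hσ, rfl⟩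
  exact ⟨σ, hσ, rfl⟩

lemma trInner_le_mul_sSup (hcomp : IsCompact F) {r : ℝ} (hr : r ∈ robSet F ρ)
    (hM : M.PosSemidef) : trInner M ρ ≤ (1 + r) * sSup {y : ℝ | ∃ σ ∈ F, y = trInner M σ} := by
  obtain ⟨hr0, σ, hσ, hmem⟩ := hr
  have hle := le_sSup_trInner (M := M) hcomp hmem
  rw [trInner_smul_right, trInner_add_right, trInner_smul_right,
    inv_mul_le_iff₀ (by positivity)] at hle
  nlinarith [trInner_nonneg hM hσ.1]

lemma mul_sSup_trInner_le (hne : F.Nonempty) {t : ℝ} (ht : -1 < t)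
    (hM : M ∈ advantageCone F ρ t) :
    (1 + t) * sSup {y : ℝ | ∃ σ ∈ F, y = trInner M σ} ≤ trInner M ρ := by
  have h1t : 0 < 1 + t := by linarith
  rw [← le_div_iff₀' h1t]
  obtain ⟨τ, hτ⟩ := hne
  refine csSup_le ⟨_, τ, hτ, rfl⟩ ?_
  rintro _ ⟨σ, hσ, rfl⟩
  exact (le_div_iff₀' h1t).mpr (hM.2 σ hσ)

end sSup

theorem robustness_eq_max_advantage_general (n : ℕ) (F : Set (Matrix (Fin n) (Fin n) ℂ))
    (hcomp : IsCompact F) (hconv : Convex ℝ F)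
    (hF : ∀ τ ∈ F, IsDensity τ) (hfull : ∃ τ ∈ F, τ.PosDef)
    (ρ : Matrix (Fin n) (Fin n) ℂ) (hρ : IsDensity ρ)
    (r : ℝ) (hr : IsLeast (robSet F ρ) r) :
    IsGreatest {x : ℝ | ∃ M : Matrix (Fin n) (Fin n) ℂ, M.PosSemidef ∧ M ≠ 0 ∧
        x = trInner M ρ / sSup {y : ℝ | ∃ σ ∈ F, y = trInner M σ}} (1 + r) := by
  obtain ⟨τ₀, hτ₀F, hτ₀⟩ := hfull
  have hsup_pos : ∀ M : Matrix (Fin n) (Fin n) ℂ, M.PosSemidef → M ≠ 0 →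
      0 < sSup {y : ℝ | ∃ σ ∈ F, y = trInner M σ} := fun M hM hM0 =>
    (trInner_comm τ₀ M ▸ trInner_pos hτ₀ hM hM0).trans_le (le_sSup_trInner hcomp hτ₀F)
  refine ⟨?_, ?_⟩
  · obtain ⟨M, hM, hM0⟩ := exists_ne_zero_mem_advantageCone hcomp hconv ⟨τ₀, hτ₀F⟩ hF hρ hr
    refine ⟨M, hM.1, hM0, (eq_div_iff (hsup_pos M hM.1 hM0).ne').mpr (le_antisymm ?_ ?_)⟩
    · exact mul_sSup_trInner_le ⟨τ₀, hτ₀F⟩ (by linarith [hr.1.1]) hM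
    · exact trInner_le_mul_sSup hcomp hr.1 hM.1
  · rintro _ ⟨M, hM, hM0, rfl⟩
    rw [div_le_iff₀ (hsup_pos M hM hM0)]
    exact trInner_le_mul_sSup hcomp hr.1 hM

/-- The robustness equals the maximal advantage ratio: for `F` containing a positive definite
state, `1 + R(ρ) = max_{M PSD, M ≠ 0} Tr[Mρ] / max_{σ∈F} Tr[Mσ]`, the maximum attained. -/
theorem robustness_eq_max_advantage (n : ℕ) (F : Set (Matrix (Fin n) (Fin n) ℂ))
    (hne : F.Nonempty) (hcomp : IsCompact F) (hconv : Convex ℝ F)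
    (hF : ∀ τ ∈ F, IsDensity τ) (hfull : ∃ τ ∈ F, τ.PosDef)
    (ρ : Matrix (Fin n) (Fin n) ℂ) (hρ : IsDensity ρ)
    (r : ℝ) (hr : IsLeast (robSet F ρ) r) :
    IsGreatest {x : ℝ | ∃ M : Matrix (Fin n) (Fin n) ℂ, M.PosSemidef ∧ M ≠ 0 ∧
        x = trInner M ρ / sSup {y : ℝ | ∃ σ ∈ F, y = trInner M σ}} (1 + r) :=
  robustness_eq_max_advantage_general n F hcomp hconv hF hfull ρ hρ r hr
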